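/- For the model system with F₁(u₁,u₂) = |u₂|²u₂ and F₂(u₁,u₂) = |u₁|²u₁, there is no positive-definite Hermitian matrix H = [[p, q₁+iq₂],[q₁-iq₂, r]] (p,r > 0, pr > q₁²+q₂²) such that Im(conj(A₁)(pF₁+(q₁+iq₂)F₂)(A₁,A₂) + conj(A₂)((q₁-iq₂)F₁+rF₂)(A₁,A₂)) ≤ 0 for all (A₁,A₂) ∈ ℂ². -/
import Mathlib


theorem stmt15 :
    ¬ ∃ p q₁ q₂ r : ℝ, 0 < p ∧ 0 < r ∧ q₁ ^ 2 + q₂ ^ 2 < p * r ∧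
      ∀ A₁ A₂ : ℂ,
        ((starRingEnd ℂ) A₁ * ((p : ℂ) * ((Complex.normSq A₂ : ℂ) * A₂)
              + ((q₁ : ℂ) + (q₂ : ℂ) * Complex.I) * ((Complex.normSq A₁ : ℂ) * A₁))
          + (starRingEnd ℂ) A₂ * (((q₁ : ℂ) - (q₂ : ℂ) * Complex.I) * ((Complex.normSq A₂ : ℂ) * A₂)
              + (r : ℂ) * ((Complex.normSq A₁ : ℂ) * A₁))).im ≤ 0 := by
  rintro ⟨p, q₁, q₂, r, hp, hr, _, h⟩
  have h1 := h 1 Complex.I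
  have h2 := h 1 (-Complex.I)
  have h3 := h 1 0
  have h4 := h 1 (2 * Complex.I)
  simp only [Complex.normSq_apply, Complex.add_im, Complex.mul_im, Complex.mul_re,
    Complex.add_re, Complex.sub_re, Complex.sub_im, Complex.I_re, Complex.I_im,
    Complex.ofReal_re, Complex.ofReal_im, Complex.one_re, Complex.one_im,
    Complex.neg_re, Complex.neg_im, Complex.conj_re, Complex.conj_im,
    Complex.zero_re, Complex.zero_im, map_one, RingHom.map_zero] at h1 h2 h3 h4
  norm_num at h1 h2 h3 h4
  linarith
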